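/- arXiv:1610.06844 — 5 statements merged into one kernel-verified Lean document; each statement's English description precedes it below -/
import Mathlib

section
/- Let d be a real number with 0 < d < π. For all real numbers s and t, |tanh((s + d·i)/2) − tanh(t/2)|² = (1/cosh²(t/2)) · (cosh(s−t) − cos d)/(cosh s + cos d). -/
/-!
Writing `tanh a - tanh b = sinh (a - b) / (cosh a * cosh b)` reduces the claim to the moduli of
`sinh` and `cosh` at a complex point, and `‖f z‖ ^ 2 = f z * f (conj z)` turns these into
product-to-sum formulas: `‖sinh z‖ ^ 2 = (cosh (2 re z) - cos (2 im z)) / 2`, and the same with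
`+` for `cosh`.
-/

open Real Complex ComplexConjugate

namespace Complex

theorem tanh_sub_tanh {a b : ℂ} (ha : cosh a ≠ 0) (hb : cosh b ≠ 0) :
    tanh a - tanh b = sinh (a - b) / (cosh a * cosh b) := by
  rw [tanh_eq_sinh_div_cosh, tanh_eq_sinh_div_cosh, sinh_sub]
  field_simp

theorem norm_sinh_sq (z : ℂ) :
    ‖sinh z‖ ^ 2 = (Real.cosh (2 * z.re) - Real.cos (2 * z.im)) / 2 := by
  apply ofReal_injective
  calc ((‖sinh z‖ ^ 2 : ℝ) : ℂ) = sinh z * sinh (conj z) := by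
        rw [sinh_conj, mul_conj, normSq_eq_norm_sq]
    _ = (cosh (z + conj z) - cosh (z - conj z)) / 2 := by rw [cosh_add, cosh_sub]; ring
    _ = _ := by rw [add_conj, sub_conj, cosh_mul_I]; push_cast; ring

theorem norm_cosh_sq (z : ℂ) :
    ‖cosh z‖ ^ 2 = (Real.cosh (2 * z.re) + Real.cos (2 * z.im)) / 2 := by
  apply ofReal_injective
  calc ((‖cosh z‖ ^ 2 : ℝ) : ℂ) = cosh z * cosh (conj z) := by
        rw [cosh_conj, mul_conj, normSq_eq_norm_sq]
    _ = (cosh (z + conj z) + cosh (z - conj z)) / 2 := by rw [cosh_add, cosh_sub]; ring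
    _ = _ := by rw [add_conj, sub_conj, cosh_mul_I]; push_cast; ring

end Complex

theorem stmt_1 (d : ℝ) (hd : 0 < d) (hdπ : d < Real.pi) (s t : ℝ) :
    ‖Complex.tanh ((s + d * Complex.I) / 2) - Complex.tanh ((t : ℂ) / 2)‖ ^ 2 =
      (1 / Real.cosh (t / 2) ^ 2) *
        ((Real.cosh (s - t) - Real.cos d) / (Real.cosh s + Real.cos d)) := by
  have hcos : -1 < Real.cos d := by
    simpa using Real.cos_lt_cos_of_nonneg_of_le_pi hd.le le_rfl hdπ
  have hden : 0 < Real.cosh s + Real.cos d := by linarith [Real.one_le_cosh s]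
  have hnorm_a : ‖cosh ((s + d * I) / 2)‖ ^ 2 = (Real.cosh s + Real.cos d) / 2 := by
    simp [norm_cosh_sq, mul_div_cancel₀]
  have hnorm_b : ‖cosh ((t : ℂ) / 2)‖ = Real.cosh (t / 2) := by
    rw [← ofReal_ofNat, ← ofReal_div, ← ofReal_cosh, norm_real, norm_of_nonneg (cosh_pos _).le]
  have hca : cosh ((s + d * I) / 2) ≠ 0 := by
    rw [← norm_ne_zero_iff, ← pow_ne_zero_iff two_ne_zero, hnorm_a]
    positivity
  have hcb : cosh ((t : ℂ) / 2) ≠ 0 := by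
    rw [← norm_ne_zero_iff, hnorm_b]
    exact (cosh_pos _).ne'
  have hnorm_diff :
      ‖sinh ((s + d * I) / 2 - t / 2)‖ ^ 2 = (Real.cosh (s - t) - Real.cos d) / 2 := by
    simp [norm_sinh_sq, ← sub_div, mul_div_cancel₀]
  rw [tanh_sub_tanh hca hcb, norm_div, norm_mul, div_pow, mul_pow, hnorm_diff, hnorm_a, hnorm_b]
  field_simp
end

section
/- Let α and β be distinct real numbers with α + β > 0, and set a = max{α, β}, b = min{α, β}. Then for every real number t, the integral J(α, β; t) = ∫_{−∞}^{∞} ds / (cosh^α(s − t) · cosh^β s) satisfies J(α, β; t) ≤ (max{2^{a+1}, 2^{a+b+1}} / (a² − b²)) · (−b·e^{−a|t|} + a·e^{−b|t|}). -/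
/-!
Since `e^{|x|} / 2 ≤ cosh x ≤ e^{|x|}`, the integrand is at most
`2^{max α 0 + max β 0} e^{-α|s-t| - β|s|}`, and this exponential kernel integrates in closed form
by splitting `ℝ` at `0` and `t`. The substitutions `s ↦ -s` and `s ↦ t - s` reduce to
`β < α` and `t ≥ 0`, where `2 · 2^{α + max β 0}` is the constant of the statement.
-/

open Real MeasureTheory Set

lemma inv_cosh_rpow_le (γ x : ℝ) : (cosh x ^ γ)⁻¹ ≤ 2 ^ max γ 0 * exp (-(γ * |x|)) := by
  rw [← cosh_abs, ← rpow_neg (cosh_pos _).le]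
  rcases le_or_gt 0 γ with hγ | hγ
  · have hlow : exp |x| / 2 ≤ cosh |x| := by
      rw [cosh_eq]; linarith [exp_pos (-|x|)]
    calc cosh |x| ^ (-γ) ≤ (exp |x| / 2) ^ (-γ) :=
          rpow_le_rpow_of_nonpos (by positivity) hlow (by linarith)
      _ = 2 ^ max γ 0 * exp (-(γ * |x|)) := by
          rw [max_eq_left hγ, div_rpow (exp_pos _).le zero_le_two, rpow_neg zero_le_two,
            ← exp_mul]
          field_simp
  · have hhigh : cosh |x| ≤ exp |x| := by
      rw [cosh_eq]; linarith [exp_le_exp.2 (neg_le_self (abs_nonneg x))]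
    calc cosh |x| ^ (-γ) ≤ exp |x| ^ (-γ) :=
          rpow_le_rpow (cosh_pos _).le hhigh (by linarith)
      _ = 2 ^ max γ 0 * exp (-(γ * |x|)) := by
          rw [max_eq_right hγ.le, rpow_zero, one_mul, ← exp_mul]
          ring_nf

lemma one_div_cosh_rpow_mul_cosh_rpow_le (α β x y : ℝ) :
    1 / (cosh x ^ α * cosh y ^ β) ≤
      2 ^ (max α 0 + max β 0) * exp (-(α * |x|) - β * |y|) := by
  rw [one_div, mul_inv, rpow_add two_pos, sub_eq_add_neg, exp_add, mul_mul_mul_comm]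
  exact mul_le_mul (inv_cosh_rpow_le α x) (inv_cosh_rpow_le β y) (by positivity) (by positivity)

lemma integrable_and_integral_exp_neg_mul_abs_sub_sub_mul_abs {a b u : ℝ} (hba : b < a)
    (hab : 0 < a + b) (hu : 0 ≤ u) :
    Integrable (fun s ↦ exp (-(a * |s - u|) - b * |s|)) ∧
      ∫ s, exp (-(a * |s - u|) - b * |s|) =
        (exp (-(a * u)) + exp (-(b * u))) / (a + b) +
          (exp (-(b * u)) - exp (-(a * u))) / (a - b) := by
  set g := fun s ↦ exp (-(a * |s - u|) - b * |s|)
  have left : EqOn g (fun s ↦ exp (-(a * u)) * exp ((a + b) * s)) (Iic 0) := by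
    intro s (hs : s ≤ 0)
    simp only [g, abs_of_nonpos hs, abs_of_nonpos (by linarith : s - u ≤ 0), ← exp_add]
    ring_nf
  have middle : EqOn g (fun s ↦ exp (-(a * u)) * exp ((a - b) * s)) (Icc 0 u) := by
    intro s ⟨hs0, hsu⟩
    simp only [g, abs_of_nonneg hs0, abs_of_nonpos (by linarith : s - u ≤ 0), ← exp_add]
    ring_nf
  have right : EqOn g (fun s ↦ exp (a * u) * exp (-(a + b) * s)) (Ioi u) := by
    intro s (hs : u < s)
    simp only [g, abs_of_pos (by linarith : 0 < s), abs_of_pos (by linarith : 0 < s - u),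
      ← exp_add]
    ring_nf
  have hleft : IntegrableOn g (Iic 0) :=
    IntegrableOn.congr_fun ((integrableOn_exp_mul_Iic hab 0).const_mul _) left.symm
      measurableSet_Iic
  have hmiddle : IntegrableOn g (Icc 0 u) := (by fun_prop : Continuous g).integrableOn_Icc
  have hright : IntegrableOn g (Ioi u) :=
    IntegrableOn.congr_fun ((integrableOn_exp_mul_Ioi (by linarith) u).const_mul _) right.symm
      measurableSet_Ioi
  have hint : Integrable g := by
    rw [← integrableOn_univ, ← Iic_union_Ioi (a := u), ← Iic_union_Icc_eq_Iic hu]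
    exact (hleft.union hmiddle).union hright
  refine ⟨hint, ?_⟩
  have hab' : a - b ≠ 0 := sub_ne_zero.2 hba.ne'
  rw [← intervalIntegral.integral_Iic_add_Ioi hint.integrableOn hint.integrableOn,
    ← intervalIntegral.integral_interval_add_Ioi hint.integrableOn hint.integrableOn,
    setIntegral_congr_fun measurableSet_Iic left, setIntegral_congr_fun measurableSet_Ioi right,
    intervalIntegral.integral_congr (by rwa [uIcc_of_le hu]), integral_const_mul,
    integral_const_mul, intervalIntegral.integral_const_mul, integral_exp_mul_Iic hab,
    integral_exp_mul_Ioi (by linarith), intervalIntegral.integral_comp_mul_left _ hab',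
    integral_exp]
  have h1 : exp (-(a * u)) * exp ((a - b) * u) = exp (-(b * u)) := by rw [← exp_add]; ring_nf
  have h2 : exp (a * u) * exp (-(a + b) * u) = exp (-(b * u)) := by rw [← exp_add]; ring_nf
  simp only [mul_zero, exp_zero, smul_eq_mul, neg_div_neg_eq, mul_div_assoc',
    mul_left_comm _ (a - b)⁻¹, mul_sub, h1, h2, mul_one]
  field_simp
  ring

lemma max_two_rpow_add_one_eq (a b : ℝ) :
    max ((2 : ℝ) ^ (a + 1)) (2 ^ (a + b + 1)) = 2 * 2 ^ (a + max b 0) := by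
  rw [← (monotone_rpow_of_base_ge_one one_le_two).map_max, mul_comm, ← rpow_add_one two_ne_zero,
    ← max_add_add_left, add_zero, max_comm (a + b), max_add_add_right]

/-- The integral `J(α, β; t)`. -/
noncomputable def coshRpowIntegral (α β t : ℝ) : ℝ := ∫ s, 1 / (cosh (s - t) ^ α * cosh s ^ β)

lemma coshRpowIntegral_neg (α β t : ℝ) : coshRpowIntegral α β (-t) = coshRpowIntegral α β t := by
  rw [coshRpowIntegral, ← integral_neg_eq_self]
  simp_rw [coshRpowIntegral, ← cosh_neg (_ - t), neg_sub', sub_neg_eq_add, cosh_neg]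

lemma coshRpowIntegral_abs (α β t : ℝ) : coshRpowIntegral α β |t| = coshRpowIntegral α β t := by
  rcases abs_choice t with h | h <;> rw [h]
  exact coshRpowIntegral_neg α β t

lemma coshRpowIntegral_comm (α β t : ℝ) : coshRpowIntegral β α t = coshRpowIntegral α β t := by
  rw [coshRpowIntegral, ← integral_sub_left_eq_self _ volume t]
  simp_rw [coshRpowIntegral, sub_sub_cancel_left, cosh_neg, ← cosh_neg (t - _), neg_sub, mul_comm]

lemma coshRpowIntegral_le {α β t : ℝ} (hβα : β < α) (hpos : 0 < α + β) (ht : 0 ≤ t) :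
    coshRpowIntegral α β t ≤
      (max ((2 : ℝ) ^ (α + 1)) (2 ^ (α + β + 1)) / (α ^ 2 - β ^ 2)) *
        (-β * exp (-α * t) + α * exp (-β * t)) := by
  obtain ⟨hint, hval⟩ := integrable_and_integral_exp_neg_mul_abs_sub_sub_mul_abs hβα hpos ht
  have hα : max α 0 = α := max_eq_left (by linarith)
  have hαβ : α - β ≠ 0 := sub_ne_zero.2 hβα.ne'
  calc coshRpowIntegral α β t
      ≤ ∫ s, 2 ^ (max α 0 + max β 0) * exp (-(α * |s - t|) - β * |s|) :=
        integral_mono_of_nonneg (ae_of_all _ fun s ↦ by positivity) (hint.const_mul _)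
          (ae_of_all _ fun s ↦ one_div_cosh_rpow_mul_cosh_rpow_le α β (s - t) s)
    _ = _ := by
        rw [integral_const_mul, hval, max_two_rpow_add_one_eq, hα, sq_sub_sq]
        field_simp
        ring_nf

theorem stmt_4 (α β : ℝ) (hne : α ≠ β) (hpos : 0 < α + β) (t : ℝ)
    (a b : ℝ) (ha : a = max α β) (hb : b = min α β) :
    (∫ s : ℝ, 1 / (Real.cosh (s - t) ^ α * Real.cosh s ^ β)) ≤
      (max ((2 : ℝ) ^ (a + 1)) ((2 : ℝ) ^ (a + b + 1)) / (a ^ 2 - b ^ 2)) *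
        (-b * Real.exp (-a * |t|) + a * Real.exp (-b * |t|)) := by
  have hba : b < a := by
    rw [ha, hb]; exact min_lt_max.2 hne
  have hab : 0 < a + b := by
    rw [ha, hb, max_add_min]; exact hpos
  have hJ : coshRpowIntegral a b |t| = coshRpowIntegral α β t := by
    rcases le_total α β with h | h
    · rw [ha, hb, max_eq_right h, min_eq_left h, coshRpowIntegral_comm, coshRpowIntegral_abs]
    · rw [ha, hb, max_eq_left h, min_eq_right h, coshRpowIntegral_abs]
  change coshRpowIntegral α β t ≤ _
  rw [← hJ]
  exact coshRpowIntegral_le hba hab (abs_nonneg t)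
end

section
/- Let r > 0 and set c_r = π/(2√r). Define G_η(u) = −log|tanh(c_r(√u − η))| for u ≥ 0 with √u ≠ η. If u > r/π² and u ≠ η², then G_η is convex at u; more precisely, G_η''(u) = (c_r/(2u^{3/2})) · (cosh(2c_r(√u − η))/sinh²(2c_r(√u − η))) · (tanh(2c_r(√u − η)) + 2c_r·u^{1/2}) > 0. -/
/-!
Since `(log |tanh x|)' = 2 / sinh (2x)`, near `u` the first derivative is
`G' v = -c / (√v · sinh (2c(√v - η)))`, and differentiating this quotient once more gives the
formula. Its last factor is positive because `tanh > -1` while `2c√u > 1` is equivalent to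
`u > r / π²`.
-/

open Real Filter Topology

namespace Real

lemma hasDerivAt_tanh (x : ℝ) : HasDerivAt tanh (1 / cosh x ^ 2) x := by
  have h := (hasDerivAt_sinh x).div (hasDerivAt_cosh x) (cosh_pos x).ne'
  rw [show sinh / cosh = tanh from funext fun y => (tanh_eq_sinh_div_cosh y).symm] at h
  refine h.congr_deriv ?_
  field_simp
  linear_combination cosh_sq_sub_sinh_sq x

lemma hasDerivAt_neg_log_abs_tanh {x : ℝ} (hx : x ≠ 0) :
    HasDerivAt (fun y => -log |tanh y|) (-2 / sinh (2 * x)) x := by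
  have hsinh : sinh x ≠ 0 := sinh_ne_zero.2 hx
  have htanh : tanh x ≠ 0 := by
    rw [tanh_eq_sinh_div_cosh]; exact div_ne_zero hsinh (cosh_pos x).ne'
  simp only [log_abs]
  refine ((hasDerivAt_tanh x).log htanh).neg.congr_deriv ?_
  rw [sinh_two_mul, tanh_eq_sinh_div_cosh]
  field_simp

lemma rpow_three_halves {u : ℝ} (hu : 0 ≤ u) : u ^ ((3 : ℝ) / 2) = u * √u := by
  rw [show (3 : ℝ) / 2 = 1 + 1 / 2 by norm_num, rpow_add' hu (by norm_num), rpow_one,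
    ← sqrt_eq_rpow]

end Real

lemma hasDerivAt_neg_log_abs_tanh_mul_sqrt_sub {c η u : ℝ} (hu : 0 < u) (h : c * (√u - η) ≠ 0) :
    HasDerivAt (fun v => -log |tanh (c * (√v - η))|) (-c / (√u * sinh (2 * c * (√u - η)))) u := by
  have hinner := ((hasDerivAt_sqrt hu.ne').sub_const η).const_mul c
  refine ((hasDerivAt_neg_log_abs_tanh h).comp u hinner).congr_deriv ?_
  have hu' : √u ≠ 0 := (sqrt_pos.2 hu).ne'
  rw [show 2 * c * (√u - η) = 2 * (c * (√u - η)) by ring]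
  field_simp

lemma hasDerivAt_neg_div_sqrt_mul_sinh {c η u : ℝ} (hu : 0 < u)
    (h : sinh (2 * c * (√u - η)) ≠ 0) :
    HasDerivAt (fun v => -c / (√v * sinh (2 * c * (√v - η))))
      (c / (2 * u ^ ((3 : ℝ) / 2)) *
        (cosh (2 * c * (√u - η)) / sinh (2 * c * (√u - η)) ^ 2) *
        (tanh (2 * c * (√u - η)) + 2 * c * √u)) u := by
  have hsqrt := hasDerivAt_sqrt hu.ne'
  have hsinh := (hasDerivAt_sinh _).comp u ((hsqrt.sub_const η).const_mul (2 * c))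
  have hu' : √u ≠ 0 := (sqrt_pos.2 hu).ne'
  refine ((hasDerivAt_const u (-c)).div (hsqrt.mul hsinh) (mul_ne_zero hu' h)).congr_deriv ?_
  have hcosh := (cosh_pos (2 * c * (√u - η))).ne'
  simp only [Pi.mul_apply, Function.comp_apply]
  rw [rpow_three_halves hu.le, tanh_eq_sinh_div_cosh]
  field_simp
  rw [sq_sqrt hu.le]
  ring

lemma deriv_deriv_neg_log_abs_tanh_mul_sqrt_sub {c η u : ℝ} (hu : 0 < u)
    (h : c * (√u - η) ≠ 0) :
    deriv (deriv fun v => -log |tanh (c * (√v - η))|) u =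
      c / (2 * u ^ ((3 : ℝ) / 2)) *
        (cosh (2 * c * (√u - η)) / sinh (2 * c * (√u - η)) ^ 2) *
        (tanh (2 * c * (√u - η)) + 2 * c * √u) := by
  have hne : ∀ᶠ v in 𝓝 u, c * (√v - η) ≠ 0 :=
    (((continuous_sqrt.sub continuous_const).const_mul c).continuousAt).eventually_ne h
  have hderiv : deriv (fun v => -log |tanh (c * (√v - η))|) =ᶠ[𝓝 u]
      fun v => -c / (√v * sinh (2 * c * (√v - η))) := by
    filter_upwards [Ioi_mem_nhds hu, hne] with v hv hvne
    exact (hasDerivAt_neg_log_abs_tanh_mul_sqrt_sub hv hvne).deriv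
  rw [hderiv.deriv_eq]
  refine (hasDerivAt_neg_div_sqrt_mul_sinh hu ?_).deriv
  rw [mul_assoc]
  exact sinh_ne_zero.2 (mul_ne_zero two_ne_zero h)

lemma one_lt_two_mul_mul_sqrt {r c u : ℝ} (hr : 0 < r) (hc : c = π / (2 * √r))
    (hu : r / π ^ 2 < u) : 1 < 2 * c * √u := by
  have hsr : 0 < √r := sqrt_pos.2 hr
  rw [hc, show 2 * (π / (2 * √r)) * √u = π * √u / √r by field_simp, one_lt_div hsr,
    ← sqrt_sq pi_pos.le, ← sqrt_mul (sq_nonneg _)]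
  exact sqrt_lt_sqrt hr.le (by rwa [div_lt_iff₀' (by positivity)] at hu)

theorem stmt_8 (r : ℝ) (hr : 0 < r) (c : ℝ) (hc : c = Real.pi / (2 * Real.sqrt r))
    (η : ℝ) (G : ℝ → ℝ)
    (hG : G = fun u : ℝ => -Real.log |Real.tanh (c * (Real.sqrt u - η))|)
    (u : ℝ) (hu : r / Real.pi ^ 2 < u) (huη : u ≠ η ^ 2) :
    deriv (deriv G) u =
      (c / (2 * u ^ ((3 : ℝ) / 2))) *
        (Real.cosh (2 * c * (Real.sqrt u - η)) / Real.sinh (2 * c * (Real.sqrt u - η)) ^ 2) *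
        (Real.tanh (2 * c * (Real.sqrt u - η)) + 2 * c * Real.sqrt u) ∧
    0 < deriv (deriv G) u := by
  subst hG
  have hc0 : 0 < c := hc ▸ by positivity
  have hu0 : 0 < u := lt_trans (by positivity) hu
  have hη : √u ≠ η := fun h => huη (by rw [← h, sq_sqrt hu0.le])
  have hs : 2 * c * (√u - η) ≠ 0 := mul_ne_zero (by positivity) (sub_ne_zero.2 hη)
  have hG'' :=
    deriv_deriv_neg_log_abs_tanh_mul_sqrt_sub hu0 (mul_ne_zero hc0.ne' (sub_ne_zero.2 hη))
  refine ⟨hG'', hG'' ▸ ?_⟩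
  have hsinh : 0 < sinh (2 * c * (√u - η)) ^ 2 := sq_pos_of_ne_zero (sinh_ne_zero.2 hs)
  have hfactor : 0 < tanh (2 * c * (√u - η)) + 2 * c * √u := by
    linarith [neg_one_lt_tanh (2 * c * (√u - η)), one_lt_two_mul_mul_sqrt hr hc hu]
  positivity
end

section
/- Let m be an integer with m − 1 < η² < m for some real η > 0. Then ∫_{√m}^{√(m+1)} 2·log|v − η|·v dv ≥ −(1/2)·log(m + 1) + log(1/2) − 1. -/
/-!
With `F η v = (v² - η²) log (v - η) - v²/2 - ηv`, the integral over `[a, b]`, `a = √m`, `b = √(m+1)`,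
is `F η b - F η a = log (b - η) + (a² - η²)(log (b - η) - log (a - η)) - 1/2 - η(b - a)`,
because `b² - a² = 1`. As `|η| < a < b`, the middle term is nonnegative, `η(b - a) ≤ a(b - a) ≤ 1/2`,
and `2b(b - η) ≥ 2b(b - a) ≥ (b + a)(b - a) = 1`, so `log (b - η) ≥ -log (2b)`.
-/

open Real intervalIntegral Set

/-- `Real.log (v - η) = log |v - η|`, so this is a primitive of `2 v log |v - η|` on both sides of `η`. -/
noncomputable def logSubPrimitive (η v : ℝ) : ℝ :=
  (v ^ 2 - η ^ 2) * log (v - η) - v ^ 2 / 2 - η * v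

theorem hasDerivAt_logSubPrimitive {η x : ℝ} (hx : x ≠ η) :
    HasDerivAt (logSubPrimitive η) (2 * log |x - η| * x) x := by
  have hxη : x - η ≠ 0 := sub_ne_zero.mpr hx
  have hlog : HasDerivAt (fun v => log (v - η)) (x - η)⁻¹ x := by
    simpa using ((hasDerivAt_id x).sub_const η).log hxη
  have hsq : HasDerivAt (fun v : ℝ => v ^ 2 - η ^ 2) (2 * x) x := by
    simpa using (hasDerivAt_pow 2 x).sub_const (η ^ 2)
  have hF := ((hsq.mul hlog).sub ((hasDerivAt_pow 2 x).div_const 2)).sub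
    ((hasDerivAt_id x).const_mul η)
  refine hF.congr_deriv ?_
  rw [log_abs]
  field_simp
  ring

theorem integral_two_mul_log_abs_sub_mul {η a b : ℝ} (h : η ∉ uIcc a b) :
    ∫ v in a..b, 2 * log |v - η| * v = logSubPrimitive η b - logSubPrimitive η a := by
  have hne : ∀ x ∈ uIcc a b, x ≠ η := fun x hx hxη => h (hxη ▸ hx)
  refine integral_eq_sub_of_hasDerivAt (fun x hx => hasDerivAt_logSubPrimitive (hne x hx)) ?_
  refine ContinuousOn.intervalIntegrable ?_
  have hlog : ContinuousOn (fun v => log |v - η|) (uIcc a b) :=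
    (continuous_abs.comp (continuous_sub_right η)).continuousOn.log fun x hx =>
      abs_ne_zero.mpr (sub_ne_zero.mpr (hne x hx))
  exact (continuousOn_const.mul hlog).mul continuousOn_id

theorem neg_log_two_mul_sub_one_le_logSubPrimitive_sub {η a b : ℝ} (ha : 0 ≤ a) (hb : 0 ≤ b)
    (hab : b ^ 2 = a ^ 2 + 1) (hη : η ^ 2 < a ^ 2) :
    -log (2 * b) - 1 ≤ logSubPrimitive η b - logSubPrimitive η a := by
  have hηa : η < a := lt_of_abs_lt (abs_lt_of_sq_lt_sq hη ha)
  have hba : a < b := by nlinarith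
  have hexpand : logSubPrimitive η b - logSubPrimitive η a =
      log (b - η) + (a ^ 2 - η ^ 2) * (log (b - η) - log (a - η)) - 1 / 2 - η * (b - a) := by
    unfold logSubPrimitive
    rw [hab]
    ring
  have hmono : 0 ≤ (a ^ 2 - η ^ 2) * (log (b - η) - log (a - η)) :=
    mul_nonneg (by linarith) (sub_nonneg.mpr (log_le_log (by linarith) (by linarith)))
  have hdrift : η * (b - a) ≤ 1 / 2 := by nlinarith
  have hlog : 0 ≤ log (2 * b) + log (b - η) := by
    rw [← log_mul (by linarith) (by linarith)]
    exact log_nonneg (by nlinarith)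
  linarith

theorem stmt_15_general (m : ℤ) (η : ℝ) (h2 : η ^ 2 < (m : ℝ)) :
    -(1 / 2) * Real.log ((m : ℝ) + 1) + Real.log (1 / 2) - 1 ≤
      ∫ v in Real.sqrt (m : ℝ)..Real.sqrt ((m : ℝ) + 1), 2 * Real.log |v - η| * v := by
  have hm : (0 : ℝ) ≤ m := (sq_nonneg η).trans h2.le
  have hsqrt : √(m : ℝ) < √((m : ℝ) + 1) := sqrt_lt_sqrt hm (lt_add_one _)
  have hη : η ∉ uIcc √(m : ℝ) √((m : ℝ) + 1) := by
    rw [uIcc_of_le hsqrt.le]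
    have hηsq : η ^ 2 < √(m : ℝ) ^ 2 := by rwa [sq_sqrt hm]
    exact fun h => (lt_of_abs_lt (abs_lt_of_sq_lt_sq hηsq (sqrt_nonneg _))).not_ge h.1
  have hlhs : -(1 / 2) * log ((m : ℝ) + 1) + log (1 / 2) = -log (2 * √((m : ℝ) + 1)) := by
    rw [log_mul two_ne_zero (by positivity), log_sqrt (by linarith), one_div, log_inv]
    ring
  rw [hlhs, integral_two_mul_log_abs_sub_mul hη]
  exact neg_log_two_mul_sub_one_le_logSubPrimitive_sub (sqrt_nonneg _) (sqrt_nonneg _)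
    (by rw [sq_sqrt hm, sq_sqrt (by linarith)]) (by rwa [sq_sqrt hm])

theorem stmt_15 (m : ℤ) (η : ℝ) (hη : 0 < η)
    (h1 : (m : ℝ) - 1 < η ^ 2) (h2 : η ^ 2 < (m : ℝ)) :
    -(1 / 2) * Real.log ((m : ℝ) + 1) + Real.log (1 / 2) - 1 ≤
      ∫ v in Real.sqrt (m : ℝ)..Real.sqrt ((m : ℝ) + 1), 2 * Real.log |v - η| * v :=
  stmt_15_general m η h2
end

section
/- Let m be a nonnegative integer and η > 0 a real number with m < η² < m + 1. Then (m + 1 − η²)·log(√(m+1) − η) + (η² − m)·log(η − √m) ≥ −(1/2)·log(m + 1) + log(1/4). -/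
/- The weights `m + 1 - η²` and `η² - m` sum to `1`, and dividing them by `√(m+1) - η` and
`η - √m` gives `√(m+1) + η` and `η + √m`, so concavity of `log` bounds the weighted sum of logarithms below by
`-log (√(m+1) + √m + 2η) ≥ -log (4√(m+1))`. -/

open Real

lemma neg_log_le_mul_log_add_mul_log {a b u v : ℝ} (ha : 0 < a) (hb : 0 < b)
    (hu : 0 ≤ u) (hv : 0 ≤ v) (huv : u + v = 1) :
    -log (u / a + v / b) ≤ u * log a + v * log b := by
  have h := strictConcaveOn_log_Ioi.concaveOn.2 (Set.mem_Ioi.2 (inv_pos.2 ha))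
    (Set.mem_Ioi.2 (inv_pos.2 hb)) hu hv huv
  simp only [smul_eq_mul, log_inv] at h
  rw [div_eq_mul_inv, div_eq_mul_inv]
  linarith

lemma sub_sq_div_sqrt_sub {x y : ℝ} (hx : 0 ≤ x) (hy : y ≠ √x) :
    (x - y ^ 2) / (√x - y) = √x + y := by
  rw [div_eq_iff (sub_ne_zero.2 hy.symm)]
  linear_combination (Real.sq_sqrt hx).symm

theorem stmt_16 (m : ℕ) (η : ℝ) (hη : 0 < η)
    (h1 : (m : ℝ) < η ^ 2) (h2 : η ^ 2 < (m : ℝ) + 1) :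
    -(1 / 2) * Real.log ((m : ℝ) + 1) + Real.log (1 / 4) ≤
      ((m : ℝ) + 1 - η ^ 2) * Real.log (Real.sqrt ((m : ℝ) + 1) - η) +
        (η ^ 2 - (m : ℝ)) * Real.log (η - Real.sqrt (m : ℝ)) := by
  have hm : (0 : ℝ) ≤ m := Nat.cast_nonneg m
  have hηs : η < √((m : ℝ) + 1) := lt_sqrt_of_sq_lt h2
  have htη : √(m : ℝ) < η := (sqrt_lt' hη).2 h1
  have hts : √(m : ℝ) ≤ √((m : ℝ) + 1) := sqrt_le_sqrt (by linarith)
  have hconcave := neg_log_le_mul_log_add_mul_log (sub_pos.2 hηs) (sub_pos.2 htη)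
    (sub_nonneg.2 h2.le) (sub_nonneg.2 h1.le) (by ring)
  have hv : (η ^ 2 - m) / (η - √(m : ℝ)) = √(m : ℝ) + η := by
    rw [← sub_sq_div_sqrt_sub hm htη.ne', ← neg_sub (m : ℝ), ← neg_sub (√(m : ℝ)),
      neg_div_neg_eq]
  rw [sub_sq_div_sqrt_sub (by linarith) hηs.ne, hv] at hconcave
  have hlog : log (√((m : ℝ) + 1) + η + (√(m : ℝ) + η)) ≤ log 4 + 1 / 2 * log ((m : ℝ) + 1) := by
    calc log (√((m : ℝ) + 1) + η + (√(m : ℝ) + η))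
        ≤ log (4 * √((m : ℝ) + 1)) := log_le_log (by positivity) (by linarith)
      _ = log 4 + 1 / 2 * log ((m : ℝ) + 1) := by
        rw [log_mul (by norm_num) (by positivity), log_sqrt (by linarith)]
        ring
  rw [one_div (4 : ℝ), log_inv]
  linarith
end
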